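/- For the prior π(β, A) = A^{-k} on R^p × (0,∞) in the balanced hierarchical model y_i|θ_i ~ N(θ_i,V), θ_i|β,A ~ N(x_i^Tβ, A), the resulting posterior is proper if k < 1 and m > p - 2k + 2; in particular, the uniform prior (k=0) yields a proper posterior when m > p + 2, while the priors A^{-1} and A^{-2} always yield improper posteriors. -/

import Mathlib

/-!
Write `σ = V + A`. Because `X` has full column rank, `‖y - Xβ‖² ≥ ε‖β‖²/2 - ‖y‖²` for some
`ε > 0`, so for `σ ≥ V` the `β`-integral is dominated by a Gaussian integral and is
`O(σ^{p/2} σ^{-m/2})`. What remains is `∫ A^{-k} (V + A)^{-(m-p)/2} dA`, which converges at `0`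
since `k < 1` and at `∞` since `k + (m - p)/2 > 1`. Conversely, for `A ∈ (0, 1)` the
`β`-integral is bounded below by a positive constant, while `∫₀¹ A^{-k} dA = ∞` for `k ≥ 1`.
-/

open Matrix MeasureTheory Real

/-- The integral whose finiteness is equivalent to propriety of the posterior under the
prior `π(β, A) = A^{-k}` in the balanced hierarchical model (the marginal likelihood
`y | β, A ~ N(Xβ, (V+A) I_m)` times the prior, integrated over `β` and `A`). -/
noncomputable def posteriorMass {m p : ℕ} (X : Matrix (Fin m) (Fin p) ℝ)
    (y : Fin m → ℝ) (V : ℝ) (k : ℝ) : ENNReal :=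
  ∫⁻ A in Set.Ioi (0 : ℝ),
    ENNReal.ofReal (A ^ (-k)) *
      ∫⁻ β : Fin p → ℝ, ENNReal.ofReal
        ((V + A) ^ (-(m : ℝ) / 2) *
          Real.exp (-(∑ i, (y i - X.mulVec β i) ^ 2) / (2 * (V + A))))

theorem Matrix.mulVec_injective_of_rank_eq_card {m n K : Type*} [Fintype n] [Field K]
    {X : Matrix m n K} (hX : X.rank = Fintype.card n) : Function.Injective X.mulVec :=
  mulVec_injective_iff.2 <| linearIndependent_iff_card_eq_finrank_span.2 <| by
    rw [Set.finrank, ← rank_eq_finrank_span_cols, hX]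

theorem Matrix.exists_pos_mul_sum_sq_le_sum_mulVec_sq {m n : Type*} [Fintype m] [Fintype n]
    {X : Matrix m n ℝ} (hX : Function.Injective X.mulVec) :
    ∃ ε > 0, ∀ β : n → ℝ, ε * ∑ j, β j ^ 2 ≤ ∑ i, (X *ᵥ β) i ^ 2 := by
  classical
  have hinj : Function.Injective (toLpLin 2 2 X) := fun v w h => by
    rw [toLpLin_apply, toLpLin_apply] at h
    exact WithLp.ofLp_injective 2 (hX (WithLp.toLp_injective 2 h))
  obtain ⟨K, -, hK⟩ := (toLpLin 2 2 X).injective_iff_antilipschitz.1 hinj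
  obtain ⟨c, hc, hbound⟩ := antilipschitzWith_iff_exists_mul_le_norm.1 ⟨K, hK⟩
  refine ⟨c ^ 2, by positivity, fun β => ?_⟩
  have h := pow_le_pow_left₀ (by positivity) (hbound (WithLp.toLp 2 β)) 2
  rwa [mul_pow, EuclideanSpace.real_norm_sq_eq, toLpLin_apply, WithLp.ofLp_toLp,
    EuclideanSpace.real_norm_sq_eq] at h

theorem lintegral_exp_neg_mul_sum_sq (ι : Type*) [Fintype ι] {c : ℝ} (hc : 0 < c) :
    ∫⁻ β : ι → ℝ, ENNReal.ofReal (exp (-(c * ∑ i, β i ^ 2))) =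
      ENNReal.ofReal ((π / c) ^ ((Fintype.card ι : ℝ) / 2)) := by
  have hprod (β : ι → ℝ) : exp (-(c * ∑ i, β i ^ 2)) = ∏ i, exp (-c * β i ^ 2) := by
    rw [← exp_sum, Finset.mul_sum, ← Finset.sum_neg_distrib]
    simp only [neg_mul]
  have hint : Integrable fun β : ι → ℝ => ∏ i, exp (-c * β i ^ 2) :=
    Integrable.fintype_prod fun _ => integrable_exp_neg_mul_sq hc
  simp_rw [hprod]
  rw [← ofReal_integral_eq_lintegral_ofReal hint (.of_forall fun β => by positivity),
    volume_pi, integral_fintype_prod_eq_pow (fun x : ℝ => exp (-c * x ^ 2)), integral_gaussian,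
    sqrt_eq_rpow, ← rpow_natCast, ← rpow_mul (by positivity)]
  ring_nf

theorem sum_sq_div_two_sub_sum_sq_le_sum_sub_sq {ι : Type*} (s : Finset ι) (u w : ι → ℝ) :
    (∑ i ∈ s, w i ^ 2) / 2 - ∑ i ∈ s, u i ^ 2 ≤ ∑ i ∈ s, (u i - w i) ^ 2 := by
  rw [Finset.sum_div, ← Finset.sum_sub_distrib]
  exact Finset.sum_le_sum fun i _ => by nlinarith [sq_nonneg (w i - 2 * u i)]

theorem lintegral_ofReal_exp_pos {α : Type*} [MeasurableSpace α] {μ : Measure α} [NeZero μ]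
    {f : α → ℝ} (hf : Measurable f) : 0 < ∫⁻ x, ENNReal.ofReal (exp (f x)) ∂μ := by
  rw [lintegral_pos_iff_support (by fun_prop)]
  have : Function.support (fun x => ENNReal.ofReal (exp (f x))) = Set.univ :=
    Set.eq_univ_of_forall fun x => by simp [exp_pos]
  simpa [this] using NeZero.ne μ

theorem integrableOn_Ioi_rpow_neg_mul_add_rpow_neg {V k q : ℝ} (hV : 0 < V) (hk : k < 1)
    (hkq : 1 < k + q) :
    IntegrableOn (fun A : ℝ => A ^ (-k) * (V + A) ^ (-q)) (Set.Ioi 0) := by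
  have hmeas : Measurable fun A : ℝ => A ^ (-k) * (V + A) ^ (-q) := by fun_prop
  rw [← Set.Ioc_union_Ioi_eq_Ioi zero_le_one]
  refine IntegrableOn.union ?_ ?_
  · rw [integrableOn_Ioc_iff_integrableOn_Ioo]
    refine Integrable.mono' (((intervalIntegral.integrableOn_Ioo_rpow_iff (s := -k) one_pos).2
      (by linarith)).const_mul (V ^ (-q))) hmeas.aestronglyMeasurable
      ((ae_restrict_iff' measurableSet_Ioo).2 (.of_forall fun A ⟨hA0, _⟩ => ?_))
    rw [norm_of_nonneg (by positivity), mul_comm (V ^ (-q))]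
    exact mul_le_mul_of_nonneg_left (rpow_le_rpow_of_nonpos hV (by linarith) (by linarith))
      (rpow_nonneg hA0.le _)
  · refine Integrable.mono' (integrableOn_Ioi_rpow_of_lt (by linarith : -(k + q) < -1) one_pos)
      hmeas.aestronglyMeasurable
      ((ae_restrict_iff' measurableSet_Ioi).2 (.of_forall fun A (hA : 1 < A) => ?_))
    rw [norm_of_nonneg (by positivity), neg_add, rpow_add (by linarith)]
    exact mul_le_mul_of_nonneg_left (rpow_le_rpow_of_nonpos (by linarith) (by linarith)
      (by linarith)) (by positivity)

theorem setLIntegral_Ioo_rpow_eq_top {s : ℝ} (hs : s ≤ -1) :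
    ∫⁻ A in Set.Ioo (0 : ℝ) 1, ENNReal.ofReal (A ^ s) = ⊤ := by
  by_contra h
  have hmeas : Measurable fun A : ℝ => A ^ s := by fun_prop
  have hint : IntegrableOn (fun A : ℝ => A ^ s) (Set.Ioo 0 1) :=
    (lintegral_ofReal_ne_top_iff_integrable hmeas.aestronglyMeasurable
      ((ae_restrict_iff' measurableSet_Ioo).2 (.of_forall fun A hA => rpow_nonneg hA.1.le s))).1 h
  linarith [(intervalIntegral.integrableOn_Ioo_rpow_iff one_pos).1 hint]

noncomputable def integratedLikelihood {m p : ℕ} (X : Matrix (Fin m) (Fin p) ℝ)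
    (y : Fin m → ℝ) (σ : ℝ) : ENNReal :=
  ∫⁻ β : Fin p → ℝ, ENNReal.ofReal
    (σ ^ (-(m : ℝ) / 2) * exp (-(∑ i, (y i - X.mulVec β i) ^ 2) / (2 * σ)))

section

variable {m p : ℕ} (X : Matrix (Fin m) (Fin p) ℝ) (y : Fin m → ℝ) {V : ℝ}

theorem posteriorMass_eq (k : ℝ) :
    posteriorMass X y V k =
      ∫⁻ A in Set.Ioi 0, ENNReal.ofReal (A ^ (-k)) * integratedLikelihood X y (V + A) :=
  rfl

theorem exists_integratedLikelihood_le (hX : Function.Injective X.mulVec) (hV : 0 < V) :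
    ∃ C : ℝ, ∀ σ, V ≤ σ → integratedLikelihood X y σ ≤
      ENNReal.ofReal C * ENNReal.ofReal (σ ^ (-(((m : ℝ) - p) / 2))) := by
  obtain ⟨ε, hε, hXε⟩ := exists_pos_mul_sum_sq_le_sum_mulVec_sq hX
  set Y := ∑ i, y i ^ 2
  refine ⟨exp (Y / (2 * V)) * (4 * π / ε) ^ ((p : ℝ) / 2), fun σ hσ => ?_⟩
  have hσ0 : 0 < σ := hV.trans_le hσ
  have hc : 0 < ε / (4 * σ) := by positivity
  have hexp (β : Fin p → ℝ) : exp (-(∑ i, (y i - X.mulVec β i) ^ 2) / (2 * σ)) ≤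
      exp (Y / (2 * V)) * exp (-(ε / (4 * σ) * ∑ j, β j ^ 2)) := by
    rw [← exp_add, exp_le_exp]
    have hlow := hXε β
    have hres := sum_sq_div_two_sub_sum_sq_le_sum_sub_sq Finset.univ y (X *ᵥ β)
    have hY : Y / (2 * σ) ≤ Y / (2 * V) :=
      div_le_div_of_nonneg_left (Finset.sum_nonneg fun i _ => sq_nonneg _) (by positivity)
        (by linarith)
    have key : -(∑ i, (y i - X.mulVec β i) ^ 2) / (2 * σ) ≤
        Y / (2 * σ) - ε / (4 * σ) * ∑ j, β j ^ 2 := by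
      rw [div_le_iff₀ (by positivity)]
      field_simp
      linarith
    linarith
  calc integratedLikelihood X y σ
      ≤ ∫⁻ β : Fin p → ℝ, ENNReal.ofReal (σ ^ (-(m : ℝ) / 2) * exp (Y / (2 * V))) *
          ENNReal.ofReal (exp (-(ε / (4 * σ) * ∑ j, β j ^ 2))) := by
        refine lintegral_mono fun β => ?_
        rw [← ENNReal.ofReal_mul (by positivity), mul_assoc]
        exact ENNReal.ofReal_le_ofReal (mul_le_mul_of_nonneg_left (hexp β) (by positivity))
    _ = ENNReal.ofReal (σ ^ (-(m : ℝ) / 2) * exp (Y / (2 * V))) *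
          ENNReal.ofReal ((π / (ε / (4 * σ))) ^ ((p : ℝ) / 2)) := by
        rw [lintegral_const_mul' _ _ ENNReal.ofReal_ne_top, lintegral_exp_neg_mul_sum_sq _ hc,
          Fintype.card_fin]
    _ = _ := by
        rw [← ENNReal.ofReal_mul (by positivity), ← ENNReal.ofReal_mul (by positivity)]
        congr 1
        rw [show π / (ε / (4 * σ)) = 4 * π / ε * σ by field_simp,
          mul_rpow (by positivity) hσ0.le]
        have : σ ^ (-(((m : ℝ) - p) / 2)) = σ ^ (-(m : ℝ) / 2) * σ ^ ((p : ℝ) / 2) := by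
          rw [← rpow_add hσ0]
          congr 1
          ring
        rw [this]; ring

theorem le_integratedLikelihood (hV : 0 < V) {σ W : ℝ} (hVσ : V ≤ σ) (hσW : σ ≤ W) :
    ENNReal.ofReal (W ^ (-(m : ℝ) / 2)) *
        ∫⁻ β : Fin p → ℝ, ENNReal.ofReal (exp (-(∑ i, (y i - X.mulVec β i) ^ 2) / (2 * V))) ≤
      integratedLikelihood X y σ := by
  have hσ0 : 0 < σ := hV.trans_le hVσ
  rw [← lintegral_const_mul' _ _ ENNReal.ofReal_ne_top]
  refine lintegral_mono fun β => ?_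
  rw [← ENNReal.ofReal_mul (rpow_nonneg (hσ0.le.trans hσW) _)]
  refine ENNReal.ofReal_le_ofReal (mul_le_mul ?_ ?_ (exp_pos _).le (rpow_nonneg hσ0.le _))
  · exact rpow_le_rpow_of_nonpos hσ0 hσW (by rw [neg_div]; exact neg_nonpos.2 (by positivity))
  · rw [exp_le_exp, neg_div, neg_div, neg_le_neg_iff]
    exact div_le_div_of_nonneg_left (Finset.sum_nonneg fun i _ => sq_nonneg _) (by positivity)
      (by linarith)

theorem posteriorMass_lt_top (hX : Function.Injective X.mulVec) (hV : 0 < V) {k : ℝ}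
    (hk : k < 1) (hm : (p : ℝ) - 2 * k + 2 < m) : posteriorMass X y V k < ⊤ := by
  obtain ⟨C, hC⟩ := exists_integratedLikelihood_le X y hX hV
  have hint := integrableOn_Ioi_rpow_neg_mul_add_rpow_neg hV hk
    (by linarith : 1 < k + ((m : ℝ) - p) / 2)
  rw [posteriorMass_eq]
  calc ∫⁻ A in Set.Ioi 0, ENNReal.ofReal (A ^ (-k)) * integratedLikelihood X y (V + A)
      ≤ ∫⁻ A in Set.Ioi 0, ENNReal.ofReal C *
          ENNReal.ofReal (A ^ (-k) * (V + A) ^ (-(((m : ℝ) - p) / 2))) := by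
        refine setLIntegral_mono' measurableSet_Ioi fun A (hA : 0 < A) => ?_
        rw [ENNReal.ofReal_mul (by positivity), mul_left_comm]
        gcongr
        exact hC _ (by linarith)
    _ < ⊤ := by
        rw [lintegral_const_mul' _ _ ENNReal.ofReal_ne_top]
        exact ENNReal.mul_lt_top ENNReal.ofReal_lt_top hint.setLIntegral_lt_top

theorem posteriorMass_eq_top (hV : 0 < V) {k : ℝ} (hk : 1 ≤ k) :
    posteriorMass X y V k = ⊤ := by
  set c := ENNReal.ofReal ((V + 1) ^ (-(m : ℝ) / 2)) *
    ∫⁻ β : Fin p → ℝ, ENNReal.ofReal (exp (-(∑ i, (y i - X.mulVec β i) ^ 2) / (2 * V)))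
  have hc : c ≠ 0 := mul_ne_zero (ENNReal.ofReal_pos.2 (by positivity)).ne'
    (lintegral_ofReal_exp_pos (by fun_prop)).ne'
  rw [posteriorMass_eq, ← top_le_iff]
  calc ⊤ = c * ∫⁻ A in Set.Ioo 0 1, ENNReal.ofReal (A ^ (-k)) := by
        rw [setLIntegral_Ioo_rpow_eq_top (by linarith), ENNReal.mul_top hc]
    _ = ∫⁻ A in Set.Ioo 0 1, c * ENNReal.ofReal (A ^ (-k)) :=
        (lintegral_const_mul _ (by fun_prop)).symm
    _ ≤ ∫⁻ A in Set.Ioo 0 1, ENNReal.ofReal (A ^ (-k)) * integratedLikelihood X y (V + A) := by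
        refine setLIntegral_mono' measurableSet_Ioo fun A ⟨hA0, hA1⟩ => ?_
        rw [mul_comm]
        gcongr
        exact le_integratedLikelihood X y hV (by linarith) (by linarith)
    _ ≤ ∫⁻ A in Set.Ioi 0, ENNReal.ofReal (A ^ (-k)) * integratedLikelihood X y (V + A) :=
        lintegral_mono_set Set.Ioo_subset_Ioi_self

end

theorem statement13_general {m p : ℕ}
    (X : Matrix (Fin m) (Fin p) ℝ) (hX : X.rank = p)
    (y : Fin m → ℝ) (V : ℝ) (hV : 0 < V) (k : ℝ) :
    (k < 1 ∧ (m : ℝ) > (p : ℝ) - 2 * k + 2 → posteriorMass X y V k < ⊤) ∧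
    (k = 1 ∨ k = 2 → posteriorMass X y V k = ⊤) := by
  have hinj : Function.Injective X.mulVec :=
    mulVec_injective_of_rank_eq_card (by rwa [Fintype.card_fin])
  refine ⟨fun ⟨hk, hm⟩ => posteriorMass_lt_top X y hinj hV hk hm, fun hk => ?_⟩
  exact posteriorMass_eq_top X y hV (by rcases hk with rfl | rfl <;> norm_num)

/-- For the prior `π(β, A) = A^{-k}` on `ℝ^p × (0,∞)` in the balanced
hierarchical model, the posterior is proper if `k < 1` and `m > p - 2k + 2`; in
particular the uniform prior (`k = 0`) gives a proper posterior when `m > p + 2`, while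
the priors `A⁻¹` and `A⁻²` always yield improper posteriors. -/
theorem statement13 {m p : ℕ} (hpm : p < m)
    (X : Matrix (Fin m) (Fin p) ℝ) (hX : X.rank = p)
    (y : Fin m → ℝ) (V : ℝ) (hV : 0 < V) (k : ℝ) :
    (k < 1 ∧ (m : ℝ) > (p : ℝ) - 2 * k + 2 → posteriorMass X y V k < ⊤) ∧
    (k = 1 ∨ k = 2 → posteriorMass X y V k = ⊤) :=
  statement13_general X hX y V hV k
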